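/- Let n ≤ m with n | m and p = m/n. Suppose (τ_{ij}) is a p×n nonnegative real matrix whose every row sums to 1/p, and k of its entries are nonzero. Then ρ = ∑_{i=0}^{p−1} ∑_{j=0}^{n−1} τ_{ij} |ψ_{in,j}⟩⟨ψ_{in,j}| is a density operator on C^n ⊗ C^m of rank k with tr_B ρ = (1/n) I_n and tr_A ρ = (1/m) I_m. -/

import Mathlib

open ComplexOrder

/-- `ω = e^{2πi/n}`, a primitive `n`-th root of unity. -/
noncomputable def omegaC (n : ℕ) : ℂ := Complex.exp (2 * Real.pi * Complex.I / n)

/-- The cyclic shift operator `X` on `ℂ^m`: `X |j⟩ = |j + 1 mod m⟩`. -/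
def shiftX (m : ℕ) [NeZero m] : Matrix (Fin m) (Fin m) ℂ :=
  fun i j => if i = j + 1 then 1 else 0

/-- The generalized clock operator `Z_n` on `ℂ^m`: `Z_n |i⟩ = ω^i |i⟩` with `ω = e^{2πi/n}`. -/
noncomputable def weylZ (n m : ℕ) : Matrix (Fin m) (Fin m) ℂ :=
  Matrix.diagonal fun i : Fin m => omegaC n ^ (i : ℕ)

/-- The maximally entangled state `|ψ₀₀⟩ = (1/√n) ∑_{s<n} |s⟩ ⊗ |s⟩` in `ℂ^n ⊗ ℂ^m`. -/
noncomputable def psi00 (n m : ℕ) : Fin n × Fin m → ℂ :=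
  fun p => if (p.1 : ℕ) = (p.2 : ℕ) then ((Real.sqrt n : ℝ)⁻¹ : ℂ) else 0

/-- Apply an operator `M` on `ℂ^m` to the second tensor factor of `ℂ^n ⊗ ℂ^m`. -/
noncomputable def applyB {n m : ℕ} (M : Matrix (Fin m) (Fin m) ℂ)
    (v : Fin n × Fin m → ℂ) : Fin n × Fin m → ℂ :=
  fun p => ∑ c : Fin m, M p.2 c * v (p.1, c)

/-- `|ψ_{ij}⟩ = (I_n ⊗ X^i Z_n^j) |ψ₀₀⟩`. -/
noncomputable def psiV (n m : ℕ) [NeZero m] (i : Fin m) (j : Fin n) :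
    Fin n × Fin m → ℂ :=
  applyB (shiftX m ^ (i : ℕ) * weylZ n m ^ (j : ℕ)) (psi00 n m)

/-- The rank-one projector `|v⟩⟨v|`. -/
noncomputable def proj {α : Type*} (v : α → ℂ) : Matrix α α ℂ :=
  fun p q => v p * star (v q)

/-- Partial trace over the second tensor factor. -/
noncomputable def trB {n m : ℕ} (ρ : Matrix (Fin n × Fin m) (Fin n × Fin m) ℂ) :
    Matrix (Fin n) (Fin n) ℂ :=
  fun a a' => ∑ b : Fin m, ρ (a, b) (a', b)

/-- Partial trace over the first tensor factor. -/
noncomputable def trA {n m : ℕ} (ρ : Matrix (Fin n × Fin m) (Fin n × Fin m) ℂ) :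
    Matrix (Fin m) (Fin m) ℂ :=
  fun b b' => ∑ a : Fin n, ρ (a, b) (a, b')

/-- The index `i·n` in `Fin m`, for `i : Fin p` and `m = p·n`. -/
def mulIdx {p n m : ℕ} (hm : m = p * n) (hn : 0 < n) (i : Fin p) : Fin m :=
  ⟨(i : ℕ) * n, by
    subst hm
    exact Nat.mul_lt_mul_of_lt_of_le i.isLt le_rfl hn⟩

/-!
Write `e(i, a) = i·n + a`, a bijection `Fin p × Fin n ≃ Fin m`. The vector `ψ_{in,j}` is
supported on the pairs `(a, e(i, a))`, with entries `ω^{aj}/√n`. Different blocks `i` have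
disjoint supports and within a block the characters `a ↦ ω^{aj}` are orthogonal, so the `ψ_{in,j}`
are orthonormal: `ρ = A diag(τ) Aᴴ` with `Aᴴ A = 1`, which gives positivity and rank `k`.
Each `ψ_{in,j}` is maximally entangled on its support: its reduction to `ℂ^n` is `I/n`, and its
reduction to `ℂ^m` is `1/n` times the projection onto block `i`; since every row of `τ` sums to
`1/p`, these block projections average to `I/m`.
-/

open Matrix Fin.NatCast

section Proj

variable {ι α : Type*} [Fintype ι]

theorem sum_smul_proj_eq_mul_diagonal_mul_conjTranspose [DecidableEq ι] (d : ι → ℂ)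
    (v : ι → α → ℂ) :
    ∑ q, d q • proj (v q) = of (fun x q => v q x) * diagonal d * (of fun x q => v q x)ᴴ := by
  ext x y
  rw [mul_apply]
  simp only [Matrix.sum_apply, Matrix.smul_apply, proj, smul_eq_mul, mul_diagonal,
    conjTranspose_apply, of_apply]
  exact Finset.sum_congr rfl fun q _ => by ring

variable [Fintype α]

theorem posSemidef_sum_smul_proj {d : ι → ℝ} (hd : ∀ q, 0 ≤ d q) (v : ι → α → ℂ) :
    (∑ q, (d q : ℂ) • proj (v q)).PosSemidef :=
  posSemidef_sum _ fun q _ =>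
    (posSemidef_vecMulVec_self_star (v q)).smul (Complex.zero_le_real.mpr (hd q))

theorem rank_sum_smul_proj_of_orthonormal [DecidableEq ι] {v : ι → α → ℂ}
    (hv : ∀ q q', v q ⬝ᵥ star (v q') = (1 : Matrix ι ι ℂ) q q') (d : ι → ℂ) :
    (∑ q, d q • proj (v q)).rank = Fintype.card {q // d q ≠ 0} := by
  set A : Matrix α ι ℂ := of fun x q => v q x
  have hA : Aᴴ * A = 1 := by
    ext q q'
    simpa [A, mul_apply, dotProduct, one_apply, eq_comm, mul_comm] using hv q' q
  have hD : diagonal d = Aᴴ * (A * diagonal d * Aᴴ) * A := by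
    simp only [← Matrix.mul_assoc, hA, Matrix.one_mul]
    rw [Matrix.mul_assoc, hA, Matrix.mul_one]
  rw [sum_smul_proj_eq_mul_diagonal_mul_conjTranspose, ← rank_diagonal]
  refine le_antisymm ?_ ?_
  · exact (rank_mul_le_left _ _).trans (rank_mul_le_right _ _)
  · conv_lhs => rw [hD]
    exact (rank_mul_le_left _ _).trans (rank_mul_le_right _ _)

end Proj

section PartialTrace

variable {n m : ℕ} {ι : Type*} (s : Finset ι) (M : ι → Matrix (Fin n × Fin m) (Fin n × Fin m) ℂ)
  (c : ℂ) (ρ : Matrix (Fin n × Fin m) (Fin n × Fin m) ℂ)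

theorem trB_sum : trB (∑ q ∈ s, M q) = ∑ q ∈ s, trB (M q) := by
  ext a a'
  simp [trB, Matrix.sum_apply, Finset.sum_comm (s := s)]

theorem trA_sum : trA (∑ q ∈ s, M q) = ∑ q ∈ s, trA (M q) := by
  ext b b'
  simp [trA, Matrix.sum_apply, Finset.sum_comm (s := s)]

theorem trB_smul : trB (c • ρ) = c • trB ρ := by
  ext a a'
  simp [trB, Finset.mul_sum]

theorem trA_smul : trA (c • ρ) = c • trA ρ := by
  ext b b'
  simp [trA, Finset.mul_sum]

theorem trace_trB : (trB ρ).trace = ρ.trace := by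
  simp [trace, trB, Fintype.sum_prod_type]

end PartialTrace

section Clock

variable (n : ℕ) [NeZero n]

theorem omegaC_isPrimitiveRoot : IsPrimitiveRoot (omegaC n) n :=
  Complex.isPrimitiveRoot_exp n (NeZero.ne n)

theorem omegaC_pow_mul_star (t : ℕ) : omegaC n ^ t * star (omegaC n ^ t) = 1 := by
  rw [Complex.star_def, Complex.mul_conj', norm_pow,
    (omegaC_isPrimitiveRoot n).norm'_eq_one (NeZero.ne n)]
  simp

theorem sum_omegaC_pow_mul_star (j j' : Fin n) :
    ∑ a : Fin n, omegaC n ^ ((a : ℕ) * j) * star (omegaC n ^ ((a : ℕ) * j'))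
      = if j = j' then (n : ℂ) else 0 := by
  have hω := omegaC_isPrimitiveRoot n
  set ζ := omegaC n ^ (j : ℕ) * star (omegaC n ^ (j' : ℕ))
  have hterm (a : ℕ) : omegaC n ^ (a * j) * star (omegaC n ^ (a * j')) = ζ ^ a := by
    rw [mul_pow, ← star_pow, ← pow_mul, ← pow_mul, mul_comm (j : ℕ), mul_comm (j' : ℕ)]
  simp only [hterm, Fin.sum_univ_eq_sum_range (ζ ^ ·) n]
  split_ifs with hj
  · subst hj
    simp [ζ, omegaC_pow_mul_star]
  · have hζ_ne : ζ ≠ 1 := by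
      intro h
      refine hj (Fin.ext (hω.pow_inj j.isLt j'.isLt ?_))
      rw [← one_mul (omegaC n ^ (j' : ℕ)), ← h, mul_assoc, mul_comm (star _),
        omegaC_pow_mul_star, mul_one]
    have hζ_pow : ζ ^ n = 1 := by
      rw [mul_pow, ← star_pow, pow_right_comm, pow_right_comm _ (j' : ℕ), hω.pow_eq_one,
        one_pow, one_pow, star_one, mul_one]
    rw [geom_sum_eq hζ_ne, hζ_pow, sub_self, zero_div]

end Clock

theorem shiftX_pow_apply (m : ℕ) [NeZero m] (k : ℕ) (b c : Fin m) :
    (shiftX m ^ k) b c = if b = c + (k : Fin m) then 1 else 0 := by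
  induction k generalizing c with
  | zero => simp [one_apply]
  | succ k ih =>
    simp [pow_succ, mul_apply, shiftX, ih, add_assoc, add_comm (1 : Fin m)]

theorem psi00_apply {n m : ℕ} (hnm : n ≤ m) (a : Fin n) (c : Fin m) :
    psi00 n m (a, c) = if c = Fin.castLE hnm a then ((Real.sqrt n : ℝ)⁻¹ : ℂ) else 0 := by
  simp [psi00, Fin.ext_iff, eq_comm]

theorem psiV_apply {n m : ℕ} [NeZero m] (hnm : n ≤ m) (I : Fin m) (j a : Fin n) (b : Fin m) :
    psiV n m I j (a, b) = if b = Fin.castLE hnm a + I then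
      omegaC n ^ ((a : ℕ) * j) * ((Real.sqrt n : ℝ)⁻¹ : ℂ) else 0 := by
  simp only [psiV, applyB, psi00_apply hnm, mul_ite, mul_zero, Finset.sum_ite_eq',
    Finset.mem_univ, if_true, weylZ, diagonal_pow, mul_diagonal, shiftX_pow_apply,
    Fin.cast_val_eq_self, Pi.pow_apply, Fin.val_castLE, ← pow_mul]
  split_ifs <;> ring

section Blocks

variable {p n m : ℕ} (hm : m = p * n)

def blockIdx : Fin p × Fin n ≃ Fin m :=
  finProdFinEquiv.trans (finCongr hm.symm)

theorem blockIdx_val (i : Fin p) (a : Fin n) : (blockIdx hm (i, a) : ℕ) = a + n * i := rfl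

theorem castLE_add_mulIdx (hnm : n ≤ m) (hn : 0 < n) (i : Fin p) (a : Fin n) :
    Fin.castLE hnm a + mulIdx hm hn i = blockIdx hm (i, a) := by
  ext
  have h := (blockIdx hm (i, a)).isLt
  rw [blockIdx_val, mul_comm n] at h ⊢
  exact Nat.mod_eq_of_lt h

noncomputable def blockProj (i : Fin p) : Matrix (Fin m) (Fin m) ℂ :=
  diagonal fun b => if ((blockIdx hm).symm b).1 = i then 1 else 0

theorem sum_blockProj : ∑ i, blockProj hm i = 1 := by
  ext b b'
  simp [blockProj, Matrix.sum_apply, diagonal_apply, one_apply]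

variable [NeZero m] (hn : 0 < n)

theorem psiV_mulIdx_apply (i : Fin p) (j a : Fin n) (b : Fin m) :
    psiV n m (mulIdx hm hn i) j (a, b) = if b = blockIdx hm (i, a) then
      omegaC n ^ ((a : ℕ) * j) * ((Real.sqrt n : ℝ)⁻¹ : ℂ) else 0 := by
  have hnm : n ≤ m := Nat.le_of_dvd (NeZero.pos m) ⟨p, hm.trans (mul_comm p n)⟩
  rw [psiV_apply hnm, castLE_add_mulIdx]

theorem psiV_mulIdx_mul_star (i i' : Fin p) (j j' a a' : Fin n) (b b' : Fin m) :
    psiV n m (mulIdx hm hn i) j (a, b) * star (psiV n m (mulIdx hm hn i') j' (a', b')) =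
      if b = blockIdx hm (i, a) ∧ b' = blockIdx hm (i', a') then
        omegaC n ^ ((a : ℕ) * j) * star (omegaC n ^ ((a' : ℕ) * j')) * (n : ℂ)⁻¹ else 0 := by
  have hs : ((Real.sqrt n : ℝ)⁻¹ : ℂ) * star ((Real.sqrt n : ℝ)⁻¹ : ℂ) = (n : ℂ)⁻¹ := by
    rw [star_inv₀, Complex.star_def, Complex.conj_ofReal, ← mul_inv, ← Complex.ofReal_mul,
      Real.mul_self_sqrt n.cast_nonneg, Complex.ofReal_natCast]
  rw [psiV_mulIdx_apply, psiV_mulIdx_apply, ite_and]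
  split_ifs
  · rw [star_mul', ← hs]
    ring
  all_goals simp

variable [NeZero n]

theorem psiV_mulIdx_orthonormal (q q' : Fin p × Fin n) :
    psiV n m (mulIdx hm hn q.1) q.2 ⬝ᵥ star (psiV n m (mulIdx hm hn q'.1) q'.2) =
      (1 : Matrix (Fin p × Fin n) (Fin p × Fin n) ℂ) q q' := by
  obtain ⟨i, j⟩ := q
  obtain ⟨i', j'⟩ := q'
  simp only [dotProduct, Pi.star_apply, Fintype.sum_prod_type, psiV_mulIdx_mul_star, ite_and,
    Finset.sum_ite_eq', Finset.mem_univ, if_true, (blockIdx hm).injective.eq_iff, Prod.mk.injEq,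
    and_true]
  by_cases hi : i = i'
  · subst hi
    simp only [if_true, ← Finset.sum_mul, sum_omegaC_pow_mul_star, one_apply, Prod.mk.injEq,
      true_and]
    split_ifs
    · exact mul_inv_cancel₀ (NeZero.ne _)
    · exact zero_mul _
  · simp [hi, one_apply]

theorem trB_proj_psiV_mulIdx (i : Fin p) (j : Fin n) :
    trB (proj (psiV n m (mulIdx hm hn i) j)) = (n : ℂ)⁻¹ • 1 := by
  ext a a'
  simp only [trB, proj, psiV_mulIdx_mul_star, ite_and,
    Finset.sum_ite_eq', Finset.mem_univ, if_true, (blockIdx hm).injective.eq_iff, Prod.mk.injEq,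
    true_and]
  by_cases ha : a = a'
  · subst ha
    rw [if_pos rfl, omegaC_pow_mul_star, one_mul]
    simp
  · simp [ha]

theorem trA_proj_psiV_mulIdx (i : Fin p) (j : Fin n) :
    trA (proj (psiV n m (mulIdx hm hn i) j)) = (n : ℂ)⁻¹ • blockProj hm i := by
  ext b b'
  simp only [trA, proj, psiV_mulIdx_mul_star, omegaC_pow_mul_star, one_mul]
  by_cases hb : b = b'
  · subst hb
    obtain ⟨⟨i₀, a₀⟩, rfl⟩ := (blockIdx hm).surjective b
    simp [blockProj, (blockIdx hm).injective.eq_iff, ite_and]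
  · rw [Matrix.smul_apply, blockProj, diagonal_apply_ne _ hb, smul_zero]
    exact Finset.sum_eq_zero fun a _ => if_neg fun h => hb (h.1.trans h.2.symm)

end Blocks

theorem weyl_construction_divisible_general (n m p : ℕ) [NeZero n] [NeZero m] [NeZero p]
    (hm : m = p * n) (hn : 0 < n)
    (τ : Fin p → Fin n → ℝ) (hτ : ∀ i j, 0 ≤ τ i j)
    (hrow : ∀ i : Fin p, ∑ j, τ i j = (p : ℝ)⁻¹)
    (k : ℕ)
    (hk : k = (Finset.univ.filter fun q : Fin p × Fin n => τ q.1 q.2 ≠ 0).card)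
    (ρ : Matrix (Fin n × Fin m) (Fin n × Fin m) ℂ)
    (hρ : ρ = ∑ i : Fin p, ∑ j : Fin n,
        (τ i j : ℂ) • proj (psiV n m (mulIdx hm hn i) j)) :
    ρ.PosSemidef ∧ ρ.trace = 1 ∧ ρ.rank = k ∧
      trB ρ = ((n : ℂ))⁻¹ • (1 : Matrix (Fin n) (Fin n) ℂ) ∧
      trA ρ = ((m : ℂ))⁻¹ • (1 : Matrix (Fin m) (Fin m) ℂ) := by
  set ψ : Fin p × Fin n → Fin n × Fin m → ℂ := fun q => psiV n m (mulIdx hm hn q.1) q.2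
  have hρ_sum : ρ = ∑ q, (τ q.1 q.2 : ℂ) • proj (ψ q) := by
    rw [hρ, Fintype.sum_prod_type]
  have hrowC (i : Fin p) : ∑ j, (τ i j : ℂ) = (p : ℂ)⁻¹ := by
    rw [← Complex.ofReal_sum, hrow, Complex.ofReal_inv, Complex.ofReal_natCast]
  have htotal : ∑ i, ∑ j, (τ i j : ℂ) = 1 := by
    simp [hrowC]
  have htrB : trB ρ = (n : ℂ)⁻¹ • 1 := by
    simp only [hρ, trB_sum, trB_smul, trB_proj_psiV_mulIdx, ← Finset.sum_smul, htotal, one_smul]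
  refine ⟨?_, ?_, ?_, htrB, ?_⟩
  · rw [hρ_sum]
    exact posSemidef_sum_smul_proj (fun q => hτ q.1 q.2) ψ
  · rw [← trace_trB, htrB]
    simp
  · rw [hρ_sum, rank_sum_smul_proj_of_orthonormal (psiV_mulIdx_orthonormal hm hn), hk,
      Fintype.card_subtype]
    simp
  · simp only [hρ, trA_sum, trA_smul, trA_proj_psiV_mulIdx, smul_smul, ← Finset.sum_smul,
      ← Finset.sum_mul, hrowC, ← Finset.smul_sum, sum_blockProj, hm, Nat.cast_mul, mul_inv]

/-- let `n ∣ m`, `p = m/n`, and let `(τ_{ij})` be a `p × n` nonnegative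
matrix every row of which sums to `1/p`, with exactly `k` nonzero entries. Then
`ρ = ∑_{i,j} τ_{ij} |ψ_{in,j}⟩⟨ψ_{in,j}|` is a density operator on `ℂ^n ⊗ ℂ^m` of rank
`k` with margins `(1/n) I_n` and `(1/m) I_m`. -/
theorem weyl_construction_divisible (n m p : ℕ) [NeZero n] [NeZero m] [NeZero p]
    (hnm : n ≤ m) (hm : m = p * n) (hn : 0 < n)
    (τ : Fin p → Fin n → ℝ) (hτ : ∀ i j, 0 ≤ τ i j)
    (hrow : ∀ i : Fin p, ∑ j, τ i j = (p : ℝ)⁻¹)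
    (k : ℕ)
    (hk : k = (Finset.univ.filter fun q : Fin p × Fin n => τ q.1 q.2 ≠ 0).card)
    (ρ : Matrix (Fin n × Fin m) (Fin n × Fin m) ℂ)
    (hρ : ρ = ∑ i : Fin p, ∑ j : Fin n,
        (τ i j : ℂ) • proj (psiV n m (mulIdx hm hn i) j)) :
    ρ.PosSemidef ∧ ρ.trace = 1 ∧ ρ.rank = k ∧
      trB ρ = ((n : ℂ))⁻¹ • (1 : Matrix (Fin n) (Fin n) ℂ) ∧
      trA ρ = ((m : ℂ))⁻¹ • (1 : Matrix (Fin m) (Fin m) ℂ) :=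
  weyl_construction_divisible_general n m p hm hn τ hτ hrow k hk ρ hρ
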